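/- Let $\mathrm{K}(x)$ and $\mathrm{E}(x)$ denote the complete elliptic integrals of the first and second kind with parameter $x$. Then for all $x \in (0,1)$, $\frac{16\sqrt{1-x}\,\mathrm{K}^3(x)\mathrm{E}(x)}{\pi^4} \le 1$. -/

import Mathlib

open Real

/-- The complete elliptic integral of the first kind with parameter `x`. -/
noncomputable def ellipticK (x : ℝ) : ℝ :=
  ∫ φ in (0:ℝ)..(π/2), 1 / Real.sqrt (1 - x * Real.sin φ ^ 2)

/-- The complete elliptic integral of the second kind with parameter `x`. -/
noncomputable def ellipticE (x : ℝ) : ℝ :=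
  ∫ φ in (0:ℝ)..(π/2), Real.sqrt (1 - x * Real.sin φ ^ 2)

/-!
The product `P(x) = √(1 - x) K(x)³ E(x)` does not increase under the descending Landen
transformation. Writing `x = 4t/(1+t)²`, Landen's identities
`K(x) = (1+t) K(t²)` and `E(x) = 2/(1+t) E(t²) - (1-t) K(t²)`, together with the Chebyshev-type
bound `2 E(m) ≤ (2 - m) K(m)` and AM-GM, give `P(x) ≤ P(t²)`. Since `t ≤ x`, iterating drives the
parameter to `0`, where the crude bounds `K(y) ≤ (π/2)/√(1-y)` and `E(y) ≤ π/2` give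
`P(y) ≤ (π/2)⁴/(1-y) → (π/2)⁴ = π⁴/16`.
-/

open intervalIntegral Set Filter Topology

lemma one_sub_mul_sin_sq_pos {m : ℝ} (hm : m < 1) (θ : ℝ) : 0 < 1 - m * sin θ ^ 2 := by
  rcases le_total 0 m with h | h
  · nlinarith [sin_sq_le_one θ]
  · nlinarith [sq_nonneg (sin θ)]

lemma continuous_sqrt_one_sub_mul_sin_sq (m : ℝ) :
    Continuous fun θ => √(1 - m * sin θ ^ 2) := by
  fun_prop

lemma continuous_inv_sqrt_one_sub_mul_sin_sq {m : ℝ} (hm : m < 1) :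
    Continuous fun θ => 1 / √(1 - m * sin θ ^ 2) :=
  continuous_const.div (continuous_sqrt_one_sub_mul_sin_sq m) fun θ =>
    (sqrt_pos.2 (one_sub_mul_sin_sq_pos hm θ)).ne'

lemma ellipticK_nonneg (m : ℝ) : 0 ≤ ellipticK m :=
  integral_nonneg (by positivity) fun _ _ => by positivity

lemma ellipticE_nonneg (m : ℝ) : 0 ≤ ellipticE m :=
  integral_nonneg (by positivity) fun _ _ => sqrt_nonneg _

lemma ellipticK_le {m : ℝ} (hm0 : 0 ≤ m) (hm1 : m < 1) : ellipticK m ≤ π / 2 / √(1 - m) := by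
  calc ellipticK m ≤ ∫ _ in (0:ℝ)..π / 2, 1 / √(1 - m) := by
        refine integral_mono_on (by positivity)
          ((continuous_inv_sqrt_one_sub_mul_sin_sq hm1).intervalIntegrable _ _)
          intervalIntegrable_const fun θ _ => ?_
        gcongr
        nlinarith [sin_sq_le_one θ]
    _ = π / 2 / √(1 - m) := by simp [div_eq_mul_inv]

lemma ellipticE_le {m : ℝ} (hm : 0 ≤ m) : ellipticE m ≤ π / 2 := by
  calc ellipticE m ≤ ∫ _ in (0:ℝ)..π / 2, (1 : ℝ) := by
        refine integral_mono_on (by positivity)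
          ((continuous_sqrt_one_sub_mul_sin_sq m).intervalIntegrable _ _)
          intervalIntegrable_const fun θ _ => ?_
        rw [sqrt_le_one]
        nlinarith [sq_nonneg (sin θ)]
    _ = π / 2 := by simp

lemma integral_mul_nonneg_of_integral_eq_zero {w f : ℝ → ℝ} {a b : ℝ} (c : ℝ) (hab : a ≤ b)
    (hw : IntervalIntegrable w MeasureTheory.volume a b)
    (hwf : IntervalIntegrable (fun x => w x * f x) MeasureTheory.volume a b)
    (hw0 : ∫ x in a..b, w x = 0) (h : ∀ x ∈ Icc a b, 0 ≤ w x * (f x - c)) :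
    0 ≤ ∫ x in a..b, w x * f x := by
  have hc : ∫ x in a..b, w x * f x = ∫ x in a..b, w x * (f x - c) := by
    simp_rw [mul_sub]
    rw [integral_sub hwf (hw.mul_const c), intervalIntegral.integral_mul_const, hw0, zero_mul,
      sub_zero]
  exact hc ▸ integral_nonneg hab h

lemma sub_mul_one_div_sqrt_sub_nonneg {p q : ℝ} (hp : 0 < p) (hq : 0 < q) :
    0 ≤ (q - p) * (1 / √p - 1 / √q) := by
  rcases le_total p q with h | h
  · exact mul_nonneg (sub_nonneg.2 h)
      (sub_nonneg.2 (one_div_le_one_div_of_le (sqrt_pos.2 hp) (sqrt_le_sqrt h)))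
  · exact mul_nonneg_of_nonpos_of_nonpos (sub_nonpos.2 h)
      (sub_nonpos.2 (one_div_le_one_div_of_le (sqrt_pos.2 hq) (sqrt_le_sqrt h)))

lemma integral_two_mul_sin_sq_sub_one : ∫ θ in (0:ℝ)..π / 2, (2 * sin θ ^ 2 - 1) = 0 := by
  rw [integral_sub ((by fun_prop : Continuous fun θ => 2 * sin θ ^ 2).intervalIntegrable _ _)
    intervalIntegrable_const, intervalIntegral.integral_const_mul, integral_sin_sq]
  simp only [sin_zero, cos_zero, mul_one, sin_pi_div_two, cos_pi_div_two, mul_zero, sub_self,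
    zero_add, sub_zero, integral_const, smul_eq_mul]
  ring

/-- Chebyshev's inequality: `(2 - m) K(m) - 2 E(m) = ∫ m (2 sin² θ - 1) / √(1 - m sin² θ)`, where
the weight `m (2 sin² θ - 1)` has mean zero and is similarly ordered to `1 / √(1 - m sin² θ)`. -/
lemma two_mul_ellipticE_le {m : ℝ} (hm : m < 1) : 2 * ellipticE m ≤ (2 - m) * ellipticK m := by
  set w : ℝ → ℝ := fun θ => m * (2 * sin θ ^ 2 - 1)
  set f : ℝ → ℝ := fun θ => 1 / √(1 - m * sin θ ^ 2)
  have hf : Continuous f := continuous_inv_sqrt_one_sub_mul_sin_sq hm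
  have hw : Continuous w := by fun_prop
  have hgap : (2 - m) * ellipticK m - 2 * ellipticE m = ∫ θ in (0:ℝ)..π / 2, w θ * f θ := by
    rw [ellipticK, ellipticE, ← intervalIntegral.integral_const_mul,
      ← intervalIntegral.integral_const_mul,
      ← integral_sub ((hf.intervalIntegrable _ _).const_mul _)
        (((continuous_sqrt_one_sub_mul_sin_sq m).intervalIntegrable _ _).const_mul _)]
    refine integral_congr fun θ _ => ?_
    have ha := one_sub_mul_sin_sq_pos hm θ
    simp only [w, f]
    field_simp
    rw [sq_sqrt ha.le]
    ring
  have hnonneg : 0 ≤ ∫ θ in (0:ℝ)..π / 2, w θ * f θ := by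
    refine integral_mul_nonneg_of_integral_eq_zero (1 / √(1 - m / 2)) (by positivity)
      (hw.intervalIntegrable _ _) ((hw.mul hf).intervalIntegrable _ _) ?_ fun θ _ => ?_
    · rw [intervalIntegral.integral_const_mul, integral_two_mul_sin_sq_sub_one, mul_zero]
    · have key := sub_mul_one_div_sqrt_sub_nonneg (one_sub_mul_sin_sq_pos hm θ)
        (by linarith : 0 < 1 - m / 2)
      simp only [w, f]
      nlinarith [key]
  linarith

section Landen

variable {t : ℝ}

lemma one_add_mul_sin_sq_pos (ht : 0 ≤ t) (ψ : ℝ) : 0 < 1 + t * sin ψ ^ 2 := by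
  nlinarith [sq_nonneg (sin ψ)]

lemma four_mul_div_one_add_sq_lt_one (ht0 : 0 ≤ t) (ht1 : t < 1) :
    4 * t / (1 + t) ^ 2 < 1 := by
  rw [div_lt_one (by positivity)]
  nlinarith

lemma le_four_mul_div_one_add_sq (ht0 : 0 ≤ t) (ht1 : t ≤ 1) : t ≤ 4 * t / (1 + t) ^ 2 := by
  rw [le_div_iff₀ (by positivity)]
  nlinarith [mul_nonneg (mul_nonneg ht0 (sub_nonneg.2 ht1)) (by linarith : 0 ≤ 3 + t)]

lemma sqrt_one_sub_four_mul_div_one_add_sq (ht0 : 0 ≤ t) (ht1 : t ≤ 1) :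
    √(1 - 4 * t / (1 + t) ^ 2) = (1 - t) / (1 + t) := by
  have : 0 < 1 + t := by linarith
  rw [show 1 - 4 * t / (1 + t) ^ 2 = ((1 - t) / (1 + t)) ^ 2 by field_simp; ring,
    sqrt_sq (div_nonneg (by linarith) this.le)]

lemma exists_four_mul_div_one_add_sq_eq {x : ℝ} (hx0 : 0 < x) (hx1 : x < 1) :
    ∃ t, 0 < t ∧ t < 1 ∧ 4 * t / (1 + t) ^ 2 = x := by
  set b := √(1 - x)
  have hb0 : 0 < b := sqrt_pos.2 (by linarith)
  have hb2 : b ^ 2 = 1 - x := sq_sqrt (by linarith)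
  have hb1 : b < 1 := by nlinarith
  refine ⟨(1 - b) / (1 + b), div_pos (by linarith) (by linarith),
    (div_lt_one (by linarith)).2 (by linarith), ?_⟩
  field_simp
  nlinarith

noncomputable def landenAngle (t ψ : ℝ) : ℝ := arcsin ((1 + t) * sin ψ / (1 + t * sin ψ ^ 2))

lemma continuous_landenAngle (ht : 0 ≤ t) : Continuous (landenAngle t) :=
  continuous_arcsin.comp <|
    Continuous.div (by fun_prop) (by fun_prop) fun ψ => (one_add_mul_sin_sq_pos ht ψ).ne'

lemma landenAngle_zero : landenAngle t 0 = 0 := by simp [landenAngle]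

lemma landenAngle_pi_div_two (ht : 0 ≤ t) : landenAngle t (π / 2) = π / 2 := by
  have : 1 + t ≠ 0 := by positivity
  simp [landenAngle, this]

lemma sin_landenAngle (ht0 : 0 ≤ t) (ht1 : t ≤ 1) (ψ : ℝ) :
    sin (landenAngle t ψ) = (1 + t) * sin ψ / (1 + t * sin ψ ^ 2) := by
  have hd := one_add_mul_sin_sq_pos ht0 ψ
  have hs1 := neg_one_le_sin ψ
  have hs2 := sin_le_one ψ
  refine sin_arcsin ?_ ?_
  · rw [le_div_iff₀ hd]
    nlinarith [mul_nonneg (by linarith : 0 ≤ 1 + sin ψ) (by nlinarith : 0 ≤ 1 + t * sin ψ)]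
  · rw [div_le_one hd]
    nlinarith [mul_nonneg (by linarith : 0 ≤ 1 - sin ψ) (by nlinarith : 0 ≤ 1 - t * sin ψ)]

lemma sqrt_one_sub_mul_sin_landenAngle_sq (ht0 : 0 ≤ t) (ht1 : t ≤ 1) (ψ : ℝ) :
    √(1 - 4 * t / (1 + t) ^ 2 * sin (landenAngle t ψ) ^ 2)
      = (1 - t * sin ψ ^ 2) / (1 + t * sin ψ ^ 2) := by
  have hd := one_add_mul_sin_sq_pos ht0 ψ
  have hsq : 1 - 4 * t / (1 + t) ^ 2 * ((1 + t) * sin ψ / (1 + t * sin ψ ^ 2)) ^ 2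
      = ((1 - t * sin ψ ^ 2) / (1 + t * sin ψ ^ 2)) ^ 2 := by
    field_simp
    ring
  rw [sin_landenAngle ht0 ht1, hsq,
    sqrt_sq (div_nonneg (by nlinarith [sin_sq_le_one ψ]) hd.le)]

lemma hasDerivAt_landenAngle (ht0 : 0 ≤ t) (ht1 : t < 1) {ψ : ℝ} (hψ : 0 < cos ψ) :
    HasDerivAt (landenAngle t)
      ((1 + t) * (1 - t * sin ψ ^ 2) / ((1 + t * sin ψ ^ 2) * √(1 - t ^ 2 * sin ψ ^ 2))) ψ := by
  have hd := one_add_mul_sin_sq_pos ht0 ψ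
  have hg : 0 < 1 - t ^ 2 * sin ψ ^ 2 := one_sub_mul_sin_sq_pos (by nlinarith) ψ
  have hσ : HasDerivAt (fun ψ => (1 + t) * sin ψ / (1 + t * sin ψ ^ 2))
      (((1 + t) * cos ψ * (1 + t * sin ψ ^ 2) - (1 + t) * sin ψ * (t * (2 * sin ψ * cos ψ)))
        / (1 + t * sin ψ ^ 2) ^ 2) ψ := by
    refine ((hasDerivAt_sin ψ).const_mul _).div ?_ hd.ne'
    simpa using ((hasDerivAt_sin ψ).pow 2).const_mul t |>.const_add 1
  have hsq : 1 - ((1 + t) * sin ψ / (1 + t * sin ψ ^ 2)) ^ 2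
      = (cos ψ * √(1 - t ^ 2 * sin ψ ^ 2) / (1 + t * sin ψ ^ 2)) ^ 2 := by
    field_simp
    rw [sq_sqrt hg.le, cos_sq']
    ring
  have hpos : 0 < cos ψ * √(1 - t ^ 2 * sin ψ ^ 2) / (1 + t * sin ψ ^ 2) := by positivity
  have hlt := abs_lt.1 ((sq_lt_one_iff_abs_lt_one _).1 (by nlinarith : ((1 + t) * sin ψ /
    (1 + t * sin ψ ^ 2)) ^ 2 < 1))
  refine ((hasDerivAt_arcsin hlt.1.ne' hlt.2.ne).comp ψ hσ).congr_deriv ?_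
  rw [hsq, sqrt_sq hpos.le]
  field_simp
  ring

lemma integral_comp_landenAngle (ht0 : 0 ≤ t) (ht1 : t < 1) {g : ℝ → ℝ} (hg : Continuous g) :
    ∫ ψ in (0:ℝ)..π / 2, g (landenAngle t ψ) *
        ((1 + t) * (1 - t * sin ψ ^ 2) / ((1 + t * sin ψ ^ 2) * √(1 - t ^ 2 * sin ψ ^ 2)))
      = ∫ φ in (0:ℝ)..π / 2, g φ := by
  have hpi : (0:ℝ) ≤ π / 2 := by positivity
  have hderiv : Continuous fun ψ =>
      (1 + t) * (1 - t * sin ψ ^ 2) / ((1 + t * sin ψ ^ 2) * √(1 - t ^ 2 * sin ψ ^ 2)) :=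
    Continuous.div (by fun_prop) (by fun_prop) fun ψ =>
      (mul_pos (one_add_mul_sin_sq_pos ht0 ψ)
        (sqrt_pos.2 (one_sub_mul_sin_sq_pos (by nlinarith) ψ))).ne'
  have := integral_comp_mul_deriv'' (a := 0) (b := π / 2) (g := g)
    (continuous_landenAngle ht0).continuousOn (fun ψ hψ => ?_) hderiv.continuousOn
    hg.continuousOn
  · rwa [landenAngle_zero, landenAngle_pi_div_two ht0] at this
  · rw [min_eq_left hpi, max_eq_right hpi] at hψ
    exact (hasDerivAt_landenAngle ht0 ht1
      (cos_pos_of_mem_Ioo ⟨by linarith [hψ.1, pi_pos], hψ.2⟩)).hasDerivWithinAt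

lemma ellipticK_landen (ht0 : 0 ≤ t) (ht1 : t < 1) :
    ellipticK (4 * t / (1 + t) ^ 2) = (1 + t) * ellipticK (t ^ 2) := by
  rw [ellipticK, ← integral_comp_landenAngle ht0 ht1
    (continuous_inv_sqrt_one_sub_mul_sin_sq (four_mul_div_one_add_sq_lt_one ht0 ht1)),
    ellipticK, ← intervalIntegral.integral_const_mul]
  refine integral_congr fun ψ _ => ?_
  have hn : 0 < 1 - t * sin ψ ^ 2 := one_sub_mul_sin_sq_pos ht1 ψ
  rw [sqrt_one_sub_mul_sin_landenAngle_sq ht0 ht1.le]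
  field_simp

/-- After Landen's substitution, the integrand of `E(4t/(1+t)²)` differs from that of
`2/(1+t) E(t²) - (1-t) K(t²)` by the derivative of a function vanishing at `0` and `π/2`. -/
lemma hasDerivAt_landen_correction (ht0 : 0 ≤ t) (ht1 : t < 1) (ψ : ℝ) :
    HasDerivAt
      (fun ψ => 2 * t / (1 + t) * (sin ψ * cos ψ * √(1 - t ^ 2 * sin ψ ^ 2) / (1 + t * sin ψ ^ 2)))
      ((1 + t) * (1 - t * sin ψ ^ 2) ^ 2 / ((1 + t * sin ψ ^ 2) ^ 2 * √(1 - t ^ 2 * sin ψ ^ 2))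
        - (2 / (1 + t) * √(1 - t ^ 2 * sin ψ ^ 2) - (1 - t) * (1 / √(1 - t ^ 2 * sin ψ ^ 2))))
      ψ := by
  have hd := one_add_mul_sin_sq_pos ht0 ψ
  have hg : 0 < 1 - t ^ 2 * sin ψ ^ 2 := one_sub_mul_sin_sq_pos (by nlinarith) ψ
  have hsq : HasDerivAt (fun ψ => sin ψ ^ 2) (2 * sin ψ * cos ψ) ψ := by
    simpa [mul_assoc] using (hasDerivAt_sin ψ).fun_pow 2
  have hnum := ((hasDerivAt_sin ψ).mul (hasDerivAt_cos ψ)).mul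
    (((hsq.const_mul (t ^ 2)).const_sub 1).sqrt hg.ne')
  refine ((hnum.div ((hsq.const_mul t).const_add 1) hd.ne').const_mul _).congr_deriv ?_
  have hs := sq_sqrt hg.le
  have hc := cos_sq' ψ
  simp only [Pi.mul_apply]
  field_simp
  ring_nf
  rw [hs, hc]
  ring

lemma ellipticE_landen (ht0 : 0 ≤ t) (ht1 : t < 1) :
    ellipticE (4 * t / (1 + t) ^ 2)
      = 2 / (1 + t) * ellipticE (t ^ 2) - (1 - t) * ellipticK (t ^ 2) := by
  have ht2 : t ^ 2 < 1 := by nlinarith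
  have hg := continuous_sqrt_one_sub_mul_sin_sq (t ^ 2)
  have hk := continuous_inv_sqrt_one_sub_mul_sin_sq ht2
  have hg0 : ∀ ψ, √(1 - t ^ 2 * sin ψ ^ 2) ≠ 0 := fun ψ =>
    (sqrt_pos.2 (one_sub_mul_sin_sq_pos ht2 ψ)).ne'
  have hd0 : ∀ ψ, 1 + t * sin ψ ^ 2 ≠ 0 := fun ψ => (one_add_mul_sin_sq_pos ht0 ψ).ne'
  have hE : Continuous fun ψ =>
      (1 + t) * (1 - t * sin ψ ^ 2) ^ 2 / ((1 + t * sin ψ ^ 2) ^ 2 * √(1 - t ^ 2 * sin ψ ^ 2)) :=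
    Continuous.div (by fun_prop) (by fun_prop) fun ψ =>
      mul_ne_zero (pow_ne_zero _ (hd0 ψ)) (hg0 ψ)
  have hR : Continuous fun ψ =>
      2 / (1 + t) * √(1 - t ^ 2 * sin ψ ^ 2) - (1 - t) * (1 / √(1 - t ^ 2 * sin ψ ^ 2)) :=
    (continuous_const.mul hg).sub (continuous_const.mul hk)
  have hcorr : ∫ ψ in (0:ℝ)..π / 2,
      ((1 + t) * (1 - t * sin ψ ^ 2) ^ 2 / ((1 + t * sin ψ ^ 2) ^ 2 * √(1 - t ^ 2 * sin ψ ^ 2))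
        - (2 / (1 + t) * √(1 - t ^ 2 * sin ψ ^ 2) - (1 - t) * (1 / √(1 - t ^ 2 * sin ψ ^ 2))))
      = 0 := by
    rw [integral_eq_sub_of_hasDerivAt (fun ψ _ => hasDerivAt_landen_correction ht0 ht1 ψ)
      ((hE.sub hR).intervalIntegrable _ _)]
    simp
  rw [integral_sub (hE.intervalIntegrable _ _) (hR.intervalIntegrable _ _), sub_eq_zero] at hcorr
  calc ellipticE (4 * t / (1 + t) ^ 2)
      = ∫ ψ in (0:ℝ)..π / 2, (1 + t) * (1 - t * sin ψ ^ 2) ^ 2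
          / ((1 + t * sin ψ ^ 2) ^ 2 * √(1 - t ^ 2 * sin ψ ^ 2)) := by
        rw [ellipticE, ← integral_comp_landenAngle ht0 ht1 (continuous_sqrt_one_sub_mul_sin_sq _)]
        refine integral_congr fun ψ _ => ?_
        rw [sqrt_one_sub_mul_sin_landenAngle_sq ht0 ht1.le]
        field_simp [hd0 ψ]
    _ = 2 / (1 + t) * ellipticE (t ^ 2) - (1 - t) * ellipticK (t ^ 2) := by
        rw [hcorr, integral_sub ((hg.intervalIntegrable _ _).const_mul _)
          ((hk.intervalIntegrable _ _).const_mul _), intervalIntegral.integral_const_mul,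
          intervalIntegral.integral_const_mul, ellipticE, ellipticK]

noncomputable def ellipticProduct (x : ℝ) : ℝ := √(1 - x) * ellipticK x ^ 3 * ellipticE x

lemma ellipticProduct_landen_le (ht0 : 0 ≤ t) (ht1 : t < 1) :
    ellipticProduct (4 * t / (1 + t) ^ 2) ≤ ellipticProduct (t ^ 2) := by
  have ht2 : t ^ 2 < 1 := by nlinarith
  set s := √(1 - t ^ 2)
  have hs : 0 ≤ s := sqrt_nonneg _
  have hs2 : s ^ 2 = 1 - t ^ 2 := sq_sqrt (by linarith)
  set K := ellipticK (t ^ 2)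
  set E := ellipticE (t ^ 2)
  have hK : 0 ≤ K := ellipticK_nonneg _
  have hE : 0 ≤ E := ellipticE_nonneg _
  have hEK : 2 * E ≤ (1 + s ^ 2) * K := by rw [hs2]; linarith [two_mul_ellipticE_le ht2]
  -- `(1 + s²) (s E - s² (2E - s² K)) ≥ s E (1 - s)²`, using `hEK`
  have key : s ^ 2 * (2 * E - s ^ 2 * K) ≤ s * E := by
    nlinarith [mul_nonneg (pow_nonneg hs 4) (sub_nonneg.2 hEK),
      mul_nonneg (mul_nonneg hE hs) (sq_nonneg (1 - s))]
  calc ellipticProduct (4 * t / (1 + t) ^ 2) = s ^ 2 * (2 * E - s ^ 2 * K) * K ^ 3 := by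
        rw [ellipticProduct, sqrt_one_sub_four_mul_div_one_add_sq ht0 ht1.le,
          ellipticK_landen ht0 ht1, ellipticE_landen ht0 ht1, hs2]
        field_simp
        ring
    _ ≤ s * E * K ^ 3 := by gcongr
    _ = ellipticProduct (t ^ 2) := by rw [ellipticProduct]; ring

end Landen

lemma ellipticProduct_le_div_one_sub {x : ℝ} (hx0 : 0 ≤ x) (hx1 : x < 1) :
    ellipticProduct x ≤ (π / 2) ^ 4 / (1 - x) := by
  have hs : 0 < √(1 - x) := sqrt_pos.2 (by linarith)
  calc ellipticProduct x ≤ √(1 - x) * (π / 2 / √(1 - x)) ^ 3 * (π / 2) := by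
        unfold ellipticProduct
        gcongr
        · exact ellipticE_nonneg x
        · exact ellipticK_nonneg x
        · exact ellipticK_le hx0 hx1
        · exact ellipticE_le hx0
    _ = (π / 2) ^ 4 / (1 - x) := by
        field_simp
        rw [sq_sqrt (by linarith), div_self (by linarith)]

lemma ellipticProduct_le_div_one_sub_pow (n : ℕ) {x : ℝ} (hx0 : 0 < x) (hx1 : x < 1) :
    ellipticProduct x ≤ (π / 2) ^ 4 / (1 - x ^ (n + 1)) := by
  induction n generalizing x with
  | zero => simpa using ellipticProduct_le_div_one_sub hx0.le hx1
  | succ n ih =>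
    obtain ⟨t, ht0, ht1, rfl⟩ := exists_four_mul_div_one_add_sq_eq hx0 hx1
    have hpow : (t ^ 2) ^ (n + 1) ≤ (4 * t / (1 + t) ^ 2) ^ (n + 1 + 1) :=
      calc (t ^ 2) ^ (n + 1) = t ^ (2 * (n + 1)) := by rw [pow_mul]
        _ ≤ (4 * t / (1 + t) ^ 2) ^ (2 * (n + 1)) := by
          gcongr
          exact le_four_mul_div_one_add_sq ht0.le ht1.le
        _ ≤ (4 * t / (1 + t) ^ 2) ^ (n + 1 + 1) :=
          pow_le_pow_of_le_one (by positivity) hx1.le (by omega)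
    have hlt : (4 * t / (1 + t) ^ 2) ^ (n + 1 + 1) < 1 := pow_lt_one₀ hx0.le hx1 (by omega)
    calc ellipticProduct (4 * t / (1 + t) ^ 2) ≤ ellipticProduct (t ^ 2) :=
          ellipticProduct_landen_le ht0.le ht1
      _ ≤ (π / 2) ^ 4 / (1 - (t ^ 2) ^ (n + 1)) := ih (by positivity) (by nlinarith)
      _ ≤ (π / 2) ^ 4 / (1 - (4 * t / (1 + t) ^ 2) ^ (n + 1 + 1)) := by gcongr

lemma le_of_forall_le_div_one_sub_pow {a c x : ℝ} (hx0 : 0 ≤ x) (hx1 : x < 1)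
    (h : ∀ n : ℕ, a ≤ c / (1 - x ^ (n + 1))) : a ≤ c := by
  have hlim : Tendsto (fun n : ℕ => c / (1 - x ^ (n + 1))) atTop (𝓝 (c / (1 - 0))) :=
    tendsto_const_nhds.div (tendsto_const_nhds.sub
      ((tendsto_pow_atTop_nhds_zero_of_lt_one hx0 hx1).comp (tendsto_add_atTop_nat 1)))
      (by norm_num)
  rw [sub_zero, div_one] at hlim
  exact ge_of_tendsto' hlim h

theorem elliptic_product_bound (x : ℝ) (hx : x ∈ Set.Ioo (0:ℝ) 1) :
    16 * Real.sqrt (1 - x) * (ellipticK x)^3 * ellipticE x / π^4 ≤ 1 := by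
  have h : ellipticProduct x ≤ (π / 2) ^ 4 := le_of_forall_le_div_one_sub_pow hx.1.le hx.2
    fun n => ellipticProduct_le_div_one_sub_pow n hx.1 hx.2
  rw [div_le_one (by positivity)]
  unfold ellipticProduct at h
  linarith
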